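/- Let k : ℝⁿ \ {0} → ℝ be continuous and homogeneous of degree −n (k(rx) = r^{−n} k(x) for r > 0), so that k(x) = ω(x/|x|)/|x|ⁿ with ω continuous on the unit sphere, and suppose ω(x₀) ≠ 0 for some x₀. If a ≥ 0 is continuous, supported in the unit ball, with ∫ a > 0, then ∫_{|x| ≥ 2} |a ∗ k(x)| dx = ∞. -/
import Mathlib


open MeasureTheory
open Pointwise

/-- Convolution on `ℝⁿ`: `a ∗ k(x) = ∫ a(y) k(x−y) dy`. -/
noncomputable def conv {n : ℕ} (a k : EuclideanSpace ℝ (Fin n) → ℝ)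
    (x : EuclideanSpace ℝ (Fin n)) : ℝ :=
  ∫ y, a y * k (x - y)

set_option maxHeartbeats 1600000 in
/-- If `a ≥ 0` is continuous, supported in the unit ball, with `∫ a > 0`, and
`k(x) = ω(x/|x|)/|x|ⁿ` with `ω` continuous away from `0`, homogeneous of degree `0`,
and not identically zero, then `∫_{|x| ≥ 2} |a ∗ k(x)| dx = ∞`. -/
theorem convolution_with_homogeneous_kernel_not_integrable
    (n : ℕ) (hn : 1 ≤ n)
    (a : EuclideanSpace ℝ (Fin n) → ℝ) (ha_cont : Continuous a)
    (ha_nonneg : ∀ x, 0 ≤ a x)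
    (ha_supp : Function.support a ⊆ Metric.closedBall 0 1)
    (ha_int : 0 < ∫ x, a x)
    (ω : EuclideanSpace ℝ (Fin n) → ℝ)
    (hω_cont : ContinuousOn ω {x | x ≠ 0})
    (hω_hom : ∀ (r : ℝ), 0 < r → ∀ x, ω (r • x) = ω x)
    (hω_ne : ∃ x₀, x₀ ≠ 0 ∧ ω x₀ ≠ 0)
    (k : EuclideanSpace ℝ (Fin n) → ℝ)
    (hk : ∀ x, x ≠ 0 → k x = ω x / ‖x‖ ^ n) :
    ∫⁻ x in {x : EuclideanSpace ℝ (Fin n) | 2 ≤ ‖x‖},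
      ENNReal.ofReal |conv a k x| = ⊤ := by
  classical
  obtain ⟨x₀, hx₀ne, hωx₀⟩ := hω_ne
  have hx₀norm : 0 < ‖x₀‖ := norm_pos_iff.mpr hx₀ne
  set u₀ : EuclideanSpace ℝ (Fin n) := ‖x₀‖⁻¹ • x₀ with hu₀def
  have hu₀norm : ‖u₀‖ = 1 := by
    rw [hu₀def, norm_smul, Real.norm_eq_abs, abs_of_pos (inv_pos.mpr hx₀norm),
      inv_mul_cancel₀ hx₀norm.ne']
  have hu₀ne : u₀ ≠ 0 := by
    intro h; rw [h, norm_zero] at hu₀norm; norm_num at hu₀norm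
  have hωu₀ : ω u₀ = ω x₀ := hω_hom _ (inv_pos.mpr hx₀norm) x₀
  clear_value u₀
  set c := |ω x₀| with hcdef
  have hc : 0 < c := abs_pos.mpr hωx₀
  set φ : EuclideanSpace ℝ (Fin n) → ℝ := fun z => ω z / ‖z‖ ^ n with hφdef
  have hφu₀ : φ u₀ = ω u₀ := by simp [hφdef, hu₀norm]
  -- continuity of φ at u₀
  have hφc : ContinuousAt φ u₀ := by
    have h1 : ContinuousAt ω u₀ :=
      hω_cont.continuousAt (isOpen_ne.mem_nhds hu₀ne)
    exact h1.div ((continuous_norm.pow n).continuousAt)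
      (by rw [hu₀norm]; norm_num)
  obtain ⟨δ, hδ, hδball⟩ := Metric.continuousAt_iff.mp hφc (c / 2) (by positivity)
  set I := ∫ x, a x with hIdef
  have hI : 0 < I := ha_int
  -- a is integrable
  have ha_zero : ∀ y : EuclideanSpace ℝ (Fin n), ¬‖y‖ ≤ 1 → a y = 0 := by
    intro y hy
    by_contra h
    exact hy (by simpa using Metric.mem_closedBall.mp (ha_supp (Function.mem_support.mpr h)))
  have ha_cs : HasCompactSupport a := by
    refine HasCompactSupport.intro (isCompact_closedBall (0 : EuclideanSpace ℝ (Fin n)) 1) ?_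
    intro y hy
    exact ha_zero y (by simpa using hy)
  have ha_integrable : Integrable a := ha_cont.integrable_of_hasCompactSupport ha_cs
  set R : ℝ := max 2 (4 / δ) with hRdef
  have hR2 : (2 : ℝ) ≤ R := le_max_left _ _
  have hRδ : 4 / δ ≤ R := le_max_right _ _
  have hRpos : 0 < R := lt_of_lt_of_le two_pos hR2
  -- Key pointwise lower bound
  have key : ∀ x : EuclideanSpace ℝ (Fin n), R ≤ ‖x‖ → ‖‖x‖⁻¹ • x - u₀‖ < δ / 2 →
      c / 2 * I / ‖x‖ ^ n ≤ |conv a k x| := by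
    intro x hxR hxcone
    have hx2 : (2 : ℝ) ≤ ‖x‖ := le_trans hR2 hxR
    have hxpos : 0 < ‖x‖ := lt_of_lt_of_le two_pos hx2
    have hxne : x ≠ 0 := norm_pos_iff.mp hxpos
    have hxt : ‖x‖⁻¹ ≤ δ / 4 := by
      have h4δ : 0 < 4 / δ := by positivity
      have : 4 / δ ≤ ‖x‖ := le_trans hRδ hxR
      calc ‖x‖⁻¹ ≤ (4 / δ)⁻¹ := by
            exact inv_anti₀ h4δ this
        _ = δ / 4 := by field_simp
    -- subtraction point is nonzero for y in support
    have hsubne : ∀ y : EuclideanSpace ℝ (Fin n), ‖y‖ ≤ 1 → x - y ≠ 0 := by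
      intro y hy
      have : 1 ≤ ‖x - y‖ := by
        have := norm_sub_norm_le x y
        linarith [this]
      intro h
      rw [h, norm_zero] at this; linarith
    -- identity: integrand rewrites
    set z : EuclideanSpace ℝ (Fin n) → EuclideanSpace ℝ (Fin n) := fun y => ‖x‖⁻¹ • x - ‖x‖⁻¹ • y with hzdef
    have hzid : ∀ y : EuclideanSpace ℝ (Fin n), a y ≠ 0 →
        ω (x - y) / ‖x - y‖ ^ n = φ (z y) / ‖x‖ ^ n := by
      intro y hay
      have hy1 : ‖y‖ ≤ 1 := by
        by_contra h; exact hay (ha_zero y h)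
      have hz : x - y = ‖x‖ • z y := by
        rw [hzdef]
        simp only [smul_sub, smul_smul, mul_inv_cancel₀ hxpos.ne', one_smul]
      have hωz : ω (x - y) = ω (z y) := by
        rw [hz]; exact hω_hom _ hxpos _
      have hnz : ‖x - y‖ ^ n = ‖x‖ ^ n * ‖z y‖ ^ n := by
        rw [hz, norm_smul, Real.norm_eq_abs, abs_of_pos hxpos, mul_pow]
      rw [hωz, hnz]
      show ω (z y) / (‖x‖ ^ n * ‖z y‖ ^ n) = ω (z y) / ‖z y‖ ^ n / ‖x‖ ^ n
      rw [div_div, mul_comm]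
    have hzclose : ∀ y : EuclideanSpace ℝ (Fin n), a y ≠ 0 → |φ (z y) - ω u₀| ≤ c / 2 := by
      intro y hay
      have hy1 : ‖y‖ ≤ 1 := by
        by_contra h; exact hay (ha_zero y h)
      have hdist : dist (z y) u₀ < δ := by
        rw [dist_eq_norm]
        have h1 : ‖z y - u₀‖ ≤ ‖‖x‖⁻¹ • x - u₀‖ + ‖‖x‖⁻¹ • y‖ := by
          rw [hzdef]
          have : ‖x‖⁻¹ • x - ‖x‖⁻¹ • y - u₀ = (‖x‖⁻¹ • x - u₀) + (-(‖x‖⁻¹ • y)) := by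
            abel
          rw [this]
          exact (norm_add_le _ _).trans (by rw [norm_neg])
        have h2 : ‖‖x‖⁻¹ • y‖ ≤ δ / 4 := by
          rw [norm_smul, Real.norm_eq_abs, abs_of_pos (inv_pos.mpr hxpos)]
          calc ‖x‖⁻¹ * ‖y‖ ≤ ‖x‖⁻¹ * 1 := by
                exact mul_le_mul_of_nonneg_left hy1 (inv_pos.mpr hxpos).le
            _ = ‖x‖⁻¹ := mul_one _
            _ ≤ δ / 4 := hxt
        linarith
      have := hδball hdist
      rw [Real.dist_eq, hφu₀] at this
      exact this.le
    -- the convolution integrand equals a continuous compactly supported function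
    set f : EuclideanSpace ℝ (Fin n) → ℝ := fun y => a y * (ω (x - y) / ‖x - y‖ ^ n) with hfdef
    have hconvf : conv a k x = ∫ y, f y := by
      rw [conv]
      congr 1
      funext y
      by_cases hay : a y = 0
      · simp [hfdef, hay]
      · have hy1 : ‖y‖ ≤ 1 := by
          by_contra h; exact hay (ha_zero y h)
        show a y * k (x - y) = a y * (ω (x - y) / ‖x - y‖ ^ n)
        rw [hk _ (hsubne y hy1)]
    have hfcont : Continuous f := by
      rw [hfdef, continuous_iff_continuousAt]
      intro y
      by_cases hy : y = x
      · have hmem : {w : EuclideanSpace ℝ (Fin n) | 1 < ‖w‖} ∈ nhds y := by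
          refine (isOpen_lt continuous_const continuous_norm).mem_nhds ?_
          show 1 < ‖y‖
          rw [hy]; linarith
        have hev : (fun y => a y * (ω (x - y) / ‖x - y‖ ^ n)) =ᶠ[nhds y]
            fun _ => (0 : ℝ) := by
          filter_upwards [hmem] with w hw
          have : a w = 0 := ha_zero w (not_le.mpr hw)
          simp [this]
        exact continuousAt_const.congr hev.symm
      · have hne : x - y ≠ 0 := sub_ne_zero.mpr fun h => hy h.symm
        have hsub : ContinuousAt (fun w : EuclideanSpace ℝ (Fin n) => x - w) y :=
          (continuous_const.sub continuous_id).continuousAt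
        have hωa : ContinuousAt ω (x - y) :=
          hω_cont.continuousAt (isOpen_ne.mem_nhds hne)
        have hden : ContinuousAt (fun w : EuclideanSpace ℝ (Fin n) => ‖x - w‖ ^ n) y :=
          ((continuous_norm.pow n).continuousAt).comp hsub
        have hdenne : ‖x - y‖ ^ n ≠ 0 := by
          exact pow_ne_zero _ (norm_ne_zero_iff.mpr hne)
        have h1 : ContinuousAt (fun w : EuclideanSpace ℝ (Fin n) => ω (x - w)) y :=
          hωa.comp hsub
        exact ha_cont.continuousAt.mul (h1.div hden hdenne)
    have hfcs : HasCompactSupport f := by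
      refine HasCompactSupport.intro (isCompact_closedBall (0 : EuclideanSpace ℝ (Fin n)) 1) ?_
      intro y hy
      have : a y = 0 := ha_zero y (by simpa using hy)
      simp [hfdef, this]
    have hfint : Integrable f := hfcont.integrable_of_hasCompactSupport hfcs
    -- rewrite f y = a y * φ (z y) / ‖x‖^n
    have hfz : ∀ y, f y = a y * φ (z y) / ‖x‖ ^ n := by
      intro y
      by_cases hay : a y = 0
      · simp [hfdef, hay]
      · rw [hfdef]
        simp only
        rw [hzid y hay, mul_div_assoc]
    have hxn : (0 : ℝ) < ‖x‖ ^ n := by positivity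
    have hgint : Integrable (fun y => a y * φ (z y)) := by
      have : (fun y => a y * φ (z y)) = fun y => f y * ‖x‖ ^ n := by
        funext y
        rw [hfz y]
        field_simp
      rw [this]
      exact hfint.mul_const _
    have hconv2 : conv a k x = (∫ y, a y * φ (z y)) / ‖x‖ ^ n := by
      rw [hconvf]
      have : ∀ y, f y = (a y * φ (z y)) / ‖x‖ ^ n := hfz
      calc ∫ y, f y = ∫ y, (a y * φ (z y)) / ‖x‖ ^ n := by
            congr 1; funext y; exact hfz y
        _ = (∫ y, a y * φ (z y)) / ‖x‖ ^ n := integral_div _ _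
    -- bound the numerator
    have hIω : ∫ y, a y * ω u₀ = I * ω u₀ := by
      rw [hIdef]; exact integral_mul_const _ _
    have hdiffint : Integrable (fun y => a y * φ (z y) - a y * ω u₀) :=
      hgint.sub (ha_integrable.mul_const _)
    have hbound : |(∫ y, a y * φ (z y)) - I * ω u₀| ≤ c / 2 * I := by
      rw [← hIω, ← integral_sub hgint (ha_integrable.mul_const _)]
      calc |∫ y, (a y * φ (z y) - a y * ω u₀)|
          ≤ ∫ y, |a y * φ (z y) - a y * ω u₀| := by
            simpa [Real.norm_eq_abs] using
              norm_integral_le_integral_norm (fun y => a y * φ (z y) - a y * ω u₀)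
        _ ≤ ∫ y, a y * (c / 2) := by
            refine integral_mono_of_nonneg (Filter.Eventually.of_forall fun y => abs_nonneg _)
              (ha_integrable.mul_const _) (Filter.Eventually.of_forall fun y => ?_)
            dsimp only
            by_cases hay : a y = 0
            · simp [hay]
            · rw [← mul_sub, abs_mul, abs_of_nonneg (ha_nonneg y)]
              exact mul_le_mul_of_nonneg_left (hzclose y hay) (ha_nonneg y)
        _ = I * (c / 2) := by rw [hIdef]; exact integral_mul_const _ _
        _ = c / 2 * I := mul_comm _ _
    have hnum : c / 2 * I ≤ |∫ y, a y * φ (z y)| := by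
      have h1 : |I * ω u₀| = I * c := by
        rw [abs_mul, abs_of_pos hI, hωu₀, ← hcdef]
      have h2 : |I * ω u₀| - |(∫ y, a y * φ (z y)) - I * ω u₀| ≤ |∫ y, a y * φ (z y)| := by
        have := abs_sub_abs_le_abs_sub (I * ω u₀) (I * ω u₀ - ∫ y, a y * φ (z y))
        have h3 : I * ω u₀ - (I * ω u₀ - ∫ y, a y * φ (z y)) = ∫ y, a y * φ (z y) := by ring
        rw [h3] at this
        rw [abs_sub_comm] at this
        linarith [this]
      have := hbound
      linarith [h1, h2, this]
    rw [hconv2, abs_div, abs_of_pos hxn]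
    gcongr  -- scale-invariant open cone around u₀
  set C : Set (EuclideanSpace ℝ (Fin n)) :=
    {x | ‖x - ‖x‖ • u₀‖ < δ / 2 * ‖x‖} with hCdef
  have hCopen : IsOpen C := by
    have h1 : Continuous fun x : EuclideanSpace ℝ (Fin n) => ‖x - ‖x‖ • u₀‖ :=
      (continuous_id.sub (continuous_norm.smul continuous_const)).norm
    exact isOpen_lt h1 (continuous_const.mul continuous_norm)
  have hCiff : ∀ x : EuclideanSpace ℝ (Fin n), 0 < ‖x‖ →
      (x ∈ C ↔ ‖‖x‖⁻¹ • x - u₀‖ < δ / 2) := by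
    intro x hx
    have hsm : ‖x - ‖x‖ • u₀‖ = ‖x‖ * ‖‖x‖⁻¹ • x - u₀‖ := by
      have h1 : ‖x‖ • (‖x‖⁻¹ • x - u₀) = x - ‖x‖ • u₀ := by
        rw [smul_sub, smul_smul, mul_inv_cancel₀ hx.ne', one_smul]
      rw [← h1, norm_smul, Real.norm_eq_abs, abs_of_pos hx]
    constructor
    · intro h
      have h2 : ‖x‖ * ‖‖x‖⁻¹ • x - u₀‖ < ‖x‖ * (δ / 2) := by
        rw [← hsm]
        calc ‖x - ‖x‖ • u₀‖ < δ / 2 * ‖x‖ := h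
          _ = ‖x‖ * (δ / 2) := mul_comm _ _
      exact lt_of_mul_lt_mul_left h2 hx.le
    · intro h
      show ‖x - ‖x‖ • u₀‖ < δ / 2 * ‖x‖
      rw [hsm, mul_comm (δ / 2) ‖x‖]
      exact mul_lt_mul_of_pos_left h hx
  have hCsmul : ∀ (s : ℝ), 0 < s → ∀ x ∈ C, s • x ∈ C := by
    intro s hs x hx
    show ‖s • x - ‖s • x‖ • u₀‖ < δ / 2 * ‖s • x‖
    rw [norm_smul, Real.norm_eq_abs, abs_of_pos hs]
    have h1 : s • x - (s * ‖x‖) • u₀ = s • (x - ‖x‖ • u₀) := by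
      rw [smul_sub, smul_smul]
    rw [h1, norm_smul, Real.norm_eq_abs, abs_of_pos hs,
      show δ / 2 * (s * ‖x‖) = s * (δ / 2 * ‖x‖) by ring]
    exact mul_lt_mul_of_pos_left hx hs
  -- base annular sector
  set A : Set (EuclideanSpace ℝ (Fin n)) :=
    C ∩ Metric.ball 0 2 ∩ {x | 1 < ‖x‖} with hAdef
  have hAopen : IsOpen A :=
    (hCopen.inter Metric.isOpen_ball).inter (isOpen_lt continuous_const continuous_norm)
  have hn32 : ‖(3 / 2 : ℝ) • u₀‖ = 3 / 2 := by
    rw [norm_smul, Real.norm_eq_abs, hu₀norm, mul_one,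
      abs_of_pos (by norm_num : (0:ℝ) < 3 / 2)]
  have hAne : A.Nonempty := by
    refine ⟨(3 / 2 : ℝ) • u₀, ⟨?_, ?_⟩, ?_⟩
    · show ‖(3 / 2 : ℝ) • u₀ - ‖(3 / 2 : ℝ) • u₀‖ • u₀‖ < δ / 2 * ‖(3 / 2 : ℝ) • u₀‖
      rw [hn32, sub_self, norm_zero]
      positivity
    · rw [Metric.mem_ball, dist_zero_right, hn32]
      norm_num
    · show 1 < ‖(3 / 2 : ℝ) • u₀‖
      rw [hn32]
      norm_num
  have hApos : 0 < volume A := hAopen.measure_pos volume hAne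
  -- dyadic pieces
  set E : ℕ → Set (EuclideanSpace ℝ (Fin n)) := fun j => (R * 2 ^ j) • A with hEdef
  have hsj : ∀ j : ℕ, 0 < R * 2 ^ j := fun j => by positivity
  have h2j : ∀ j : ℕ, (1 : ℝ) ≤ 2 ^ j := fun j => one_le_pow₀ (by norm_num : (1:ℝ) ≤ 2)
  have hEsub : ∀ j : ℕ, ∀ x ∈ E j,
      R * 2 ^ j < ‖x‖ ∧ ‖x‖ < R * 2 ^ (j + 1) ∧ x ∈ C := by
    intro j x hx
    obtain ⟨w, hw, rfl⟩ := hx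
    have hw1 : 1 < ‖w‖ := hw.2
    have hw2 : ‖w‖ < 2 := by
      have := hw.1.2
      rwa [Metric.mem_ball, dist_zero_right] at this
    have hnorm : ‖(R * 2 ^ j) • w‖ = (R * 2 ^ j) * ‖w‖ := by
      rw [norm_smul, Real.norm_eq_abs, abs_of_pos (hsj j)]
    refine ⟨?_, ?_, hCsmul _ (hsj j) w hw.1.1⟩
    · rw [hnorm]
      nlinarith [hsj j]
    · rw [hnorm, pow_succ]
      nlinarith [hsj j]
  have hEmeas : ∀ j : ℕ, MeasurableSet (E j) :=
    fun j => (hAopen.smul₀ (hsj j).ne').measurableSet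
  have hdisj : Pairwise (Function.onFun Disjoint E) := by
    have hlt : ∀ i j : ℕ, i < j → Disjoint (E i) (E j) := by
      intro i j hij
      rw [Set.disjoint_left]
      intro x hxi hxj
      have h1 := (hEsub i x hxi).2.1
      have h2 := (hEsub j x hxj).1
      have h3 : R * 2 ^ (i + 1) ≤ R * 2 ^ j :=
        mul_le_mul_of_nonneg_left (pow_le_pow_right₀ (by norm_num) hij) hRpos.le
      linarith
    intro i j hij
    rcases hij.lt_or_gt with h | h
    · exact hlt _ _ h
    · exact (hlt _ _ h).symm
  have hvol : ∀ j : ℕ, volume (E j) = ENNReal.ofReal ((R * 2 ^ j) ^ n) * volume A := by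
    intro j
    have h := Measure.addHaar_smul_of_nonneg
      (volume : Measure (EuclideanSpace ℝ (Fin n))) (hsj j).le A
    rwa [finrank_euclideanSpace_fin] at h
  set G : EuclideanSpace ℝ (Fin n) → ENNReal :=
    fun x => ENNReal.ofReal (c / 2 * I / ‖x‖ ^ n) with hGdef
  -- each piece contributes at least a fixed amount to ∫ G
  have hpiece : ∀ j : ℕ,
      ENNReal.ofReal (c / 2 * I / 2 ^ n) * volume A ≤ ∫⁻ x in E j, G x := by
    intro j
    have hb : (0:ℝ) ≤ c / 2 * I / (R * 2 ^ (j + 1)) ^ n := by positivity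
    have step1 : ENNReal.ofReal (c / 2 * I / (R * 2 ^ (j + 1)) ^ n) * volume (E j)
        ≤ ∫⁻ x in E j, G x := by
      rw [← setLIntegral_const (E j) (ENNReal.ofReal (c / 2 * I / (R * 2 ^ (j + 1)) ^ n))]
      refine setLIntegral_mono' (hEmeas j) ?_
      intro x hx
      have h1 := hEsub j x hx
      have hxpos : 0 < ‖x‖ := lt_trans (hsj j) h1.1
      apply ENNReal.ofReal_le_ofReal
      have hxn : (0:ℝ) < ‖x‖ ^ n := by positivity
      apply div_le_div_of_nonneg_left (by positivity) hxn
      exact pow_le_pow_left₀ (norm_nonneg x) h1.2.1.le n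
    have hcompute : ENNReal.ofReal (c / 2 * I / (R * 2 ^ (j + 1)) ^ n) * volume (E j)
        = ENNReal.ofReal (c / 2 * I / 2 ^ n) * volume A := by
      rw [hvol j, ← mul_assoc, ← ENNReal.ofReal_mul hb]
      congr 2
      have h1 : ((R * 2 ^ (j + 1) : ℝ)) ^ n = (R * 2 ^ j) ^ n * 2 ^ n := by
        rw [pow_succ, show R * (2 ^ j * 2) = R * 2 ^ j * 2 by ring, mul_pow]
      rw [h1]
      have h2 : ((R * 2 ^ j : ℝ)) ^ n ≠ 0 := by positivity
      field_simp
    rw [← hcompute]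
    exact step1
  -- G is dominated by the convolution on the union
  have hGle : ∀ x ∈ ⋃ j, E j, G x ≤ ENNReal.ofReal |conv a k x| := by
    intro x hx
    obtain ⟨j, hj⟩ := Set.mem_iUnion.mp hx
    have h1 := hEsub j x hj
    have hxR : R ≤ ‖x‖ := by
      have : R ≤ R * 2 ^ j := le_mul_of_one_le_right hRpos.le (h2j j)
      linarith [h1.1]
    have hxpos : 0 < ‖x‖ := lt_of_lt_of_le hRpos hxR
    have hcone : ‖‖x‖⁻¹ • x - u₀‖ < δ / 2 := (hCiff x hxpos).mp h1.2.2
    exact ENNReal.ofReal_le_ofReal (key x hxR hcone)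
  have hUsub : (⋃ j, E j) ⊆ {x : EuclideanSpace ℝ (Fin n) | 2 ≤ ‖x‖} := by
    intro x hx
    obtain ⟨j, hj⟩ := Set.mem_iUnion.mp hx
    have h1 := (hEsub j x hj).1
    have : R ≤ R * 2 ^ j := le_mul_of_one_le_right hRpos.le (h2j j)
    show 2 ≤ ‖x‖
    linarith
  have hne0 : ENNReal.ofReal (c / 2 * I / 2 ^ n) * volume A ≠ 0 :=
    mul_ne_zero (ENNReal.ofReal_pos.mpr (by positivity)).ne' hApos.ne'
  have hmain : (⊤ : ENNReal) ≤ ∫⁻ x in {x : EuclideanSpace ℝ (Fin n) | 2 ≤ ‖x‖},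
      ENNReal.ofReal |conv a k x| := by
    calc (⊤ : ENNReal)
        = ∑' (_ : ℕ), ENNReal.ofReal (c / 2 * I / 2 ^ n) * volume A :=
          (ENNReal.tsum_const_eq_top_of_ne_zero hne0).symm
      _ ≤ ∑' j, ∫⁻ x in E j, G x := ENNReal.tsum_le_tsum hpiece
      _ = ∫⁻ x in ⋃ j, E j, G x := (lintegral_iUnion hEmeas hdisj G).symm
      _ ≤ ∫⁻ x in ⋃ j, E j, ENNReal.ofReal |conv a k x| :=
          setLIntegral_mono' (MeasurableSet.iUnion hEmeas) hGle
      _ ≤ ∫⁻ x in {x : EuclideanSpace ℝ (Fin n) | 2 ≤ ‖x‖},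
            ENNReal.ofReal |conv a k x| :=
          lintegral_mono' (Measure.restrict_mono hUsub le_rfl) fun x => le_rfl
  exact top_le_iff.mp hmain
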